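/- As formal power series in t, one has (1+λt)^{x/λ} · Li_k(1−e^{−t}) = Σ_{n≥1} ( Σ_{p=1}^{n} ( Σ_{m=0}^{p−1} ((−1)^{m+p+1}/(m+1)^k) (m+1)! S_2(p,m+1) ) C(n,p) (x|λ)_{n−p} ) t^n/n!. -/

import Mathlib

open Finset

/-- The generalized falling factorial `(x|λ)ₙ = x(x−λ)(x−2λ)⋯(x−(n−1)λ)`. -/
noncomputable def genFall (lam x : ℂ) (n : ℕ) : ℂ :=
  ∏ i ∈ Finset.range n, (x - (i : ℂ) * lam)

/-- The formal power series `(1+λt)^{x/λ} = Σ_{n≥0} (x|λ)ₙ tⁿ/n!`. -/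
noncomputable def degExp (lam x : ℂ) : PowerSeries ℂ :=
  PowerSeries.mk fun n => genFall lam x n / (n.factorial : ℂ)

/-- The formal power series `1 - e^{-t}`. -/
noncomputable def oneSubExpNeg : PowerSeries ℂ :=
  PowerSeries.mk fun n => if n = 0 then 0 else -((-1 : ℂ) ^ n) / (n.factorial : ℂ)

/-- The formal power series `Li_k(1 - e^{-t}) = Σ_{n≥1} (1-e^{-t})ⁿ/nᵏ`; since
`(1-e^{-t})ⁿ` has order at least `n`, the coefficient of `tˡ` only involves `n ≤ l`. -/
noncomputable def polyLogComp (k : ℤ) : PowerSeries ℂ :=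
  PowerSeries.mk fun l =>
    ∑ n ∈ Finset.Icc 1 l, ((n : ℂ) ^ k)⁻¹ * PowerSeries.coeff l (oneSubExpNeg ^ n)

/-- Stirling numbers of the second kind `S₂(n, k)`. -/
def S2 : ℕ → ℕ → ℕ
  | 0, 0 => 1
  | 0, _ + 1 => 0
  | _ + 1, 0 => 0
  | n + 1, k + 1 => (k + 1) * S2 n (k + 1) + S2 n k

/-! The series `f = 1 - e^{-t}` satisfies `f' = 1 - f`, hence `(f^{j+1})' = (j+1)(f^j - f^{j+1})`;
read on coefficients, this is the recurrence `S₂(p+1,j+1) = (j+1) S₂(p,j+1) + S₂(p,j)`, so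
`f^j = Σ_p (-1)^{p+j} j! S₂(p,j) t^p/p!`. Summing over `j` gives the exponential generating
function of `Li_k(1 - e^{-t})`, and the theorem is the binomial convolution of two such series. -/

open PowerSeries
open scoped Nat

theorem coeff_mk_div_factorial_mul {K : Type*} [Field K] [CharZero K] (a b : ℕ → K) (n : ℕ) :
    coeff n (mk (fun i => a i / i !) * mk (fun i => b i / i !)) =
      (∑ p ∈ range (n + 1), a p * n.choose p * b (n - p)) / n ! := by
  rw [coeff_mul, Nat.sum_antidiagonal_eq_sum_range_succ_mk, Finset.sum_div]
  refine Finset.sum_congr rfl fun p hp => ?_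
  have hpn : p ≤ n := Nat.lt_succ_iff.mp (mem_range.mp hp)
  have : (n ! : K) ≠ 0 := Nat.cast_ne_zero.2 n.factorial_ne_zero
  have : (p ! : K) ≠ 0 := Nat.cast_ne_zero.2 p.factorial_ne_zero
  have : ((n - p)! : K) ≠ 0 := Nat.cast_ne_zero.2 (n - p).factorial_ne_zero
  rw [coeff_mk, coeff_mk, Nat.cast_choose K hpn]
  field_simp

theorem derivative_oneSubExpNeg : d⁄dX ℂ oneSubExpNeg = 1 - oneSubExpNeg := by
  ext n
  rw [coeff_derivative, map_sub, coeff_one]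
  rcases n with _ | n
  · simp [oneSubExpNeg]
  · have : (n ! : ℂ) ≠ 0 := Nat.cast_ne_zero.2 n.factorial_ne_zero
    have : (n : ℂ) + 1 + 1 ≠ 0 := by exact_mod_cast (n + 1).succ_ne_zero
    simp only [oneSubExpNeg, coeff_mk, Nat.add_eq_zero_iff, one_ne_zero, and_false, and_self,
      ↓reduceIte, Nat.factorial_succ, Nat.cast_mul, Nat.cast_add, Nat.cast_one, zero_sub]
    field_simp
    ring

theorem derivative_oneSubExpNeg_pow (j : ℕ) :
    d⁄dX ℂ (oneSubExpNeg ^ (j + 1)) =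
      (j + 1 : ℂ) • (oneSubExpNeg ^ j - oneSubExpNeg ^ (j + 1)) := by
  rw [derivative_pow, derivative_oneSubExpNeg, Nat.add_sub_cancel, smul_eq_C_mul, map_add,
    map_one, map_natCast]
  push_cast
  ring

theorem coeff_oneSubExpNeg_pow (p j : ℕ) :
    coeff p (oneSubExpNeg ^ j) = (-1) ^ (p + j) * j ! * S2 p j / p ! := by
  induction p generalizing j with
  | zero => cases j <;> simp [S2, oneSubExpNeg, coeff_zero_eq_constantCoeff]
  | succ p ih =>
    cases j with
    | zero => simp [S2, coeff_one]
    | succ j =>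
      have hp : (p : ℂ) + 1 ≠ 0 := Nat.cast_add_one_ne_zero p
      have : (p ! : ℂ) ≠ 0 := Nat.cast_ne_zero.2 p.factorial_ne_zero
      have h := coeff_derivative (oneSubExpNeg ^ (j + 1)) p
      rw [derivative_oneSubExpNeg_pow, coeff_smul, map_sub, ih, ih, eq_comm,
        ← eq_div_iff hp] at h
      rw [h]
      simp only [S2, Nat.factorial_succ, smul_eq_mul]
      push_cast
      field_simp
      ring

theorem polyLogComp_eq (k : ℤ) :
    polyLogComp k = mk fun p =>
      (∑ m ∈ range p, (-1 : ℂ) ^ (m + p + 1) / ((m + 1 : ℕ) : ℂ) ^ k * ((m + 1)! : ℂ)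
        * (S2 p (m + 1) : ℂ)) / p ! := by
  ext p
  rw [polyLogComp, coeff_mk, coeff_mk, ← Ico_add_one_right_eq_Icc, sum_Ico_eq_sum_range,
    Nat.add_sub_cancel, Finset.sum_div]
  refine Finset.sum_congr rfl fun m _ => ?_
  rw [add_comm 1 m, coeff_oneSubExpNeg_pow]
  ring

/-- `(1+λt)^{x/λ} · Li_k(1−e^{−t}) = Σ_{n≥1} (Σ_{p=1}^{n}
(Σ_{m=0}^{p−1} ((−1)^{m+p+1}/(m+1)ᵏ)(m+1)! S₂(p,m+1)) C(n,p) (x|λ)_{n−p}) tⁿ/n!`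
(the coefficient at `n = 0` vanishes since the inner sum over `p ∈ [1,0]` is empty). -/
theorem degExp_mul_polyLog_eq (k : ℤ) (lam x : ℂ) :
    degExp lam x * polyLogComp k = PowerSeries.mk (fun n =>
      (∑ p ∈ Finset.Icc 1 n,
        (∑ m ∈ Finset.range p,
          (-1 : ℂ) ^ (m + p + 1) / ((m + 1 : ℕ) : ℂ) ^ k * ((m + 1).factorial : ℂ)
            * (S2 p (m + 1) : ℂ))
          * (n.choose p : ℂ) * genFall lam x (n - p)) / (n.factorial : ℂ)) := by
  ext n
  rw [mul_comm, polyLogComp_eq, degExp, coeff_mk_div_factorial_mul, coeff_mk]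
  congr 1
  refine (Finset.sum_subset (fun p hp => mem_range.2 (Nat.lt_succ_of_le (mem_Icc.1 hp).2))
    fun p hpn hp => ?_).symm
  obtain rfl : p = 0 := by
    rw [mem_range] at hpn
    rw [mem_Icc] at hp
    omega
  simp
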